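/- Let α ∈ ℝ, σ > 0, and D > 0 satisfy (1 − α²)·D ≤ σ². Then every π with 0 < π ≤ D satisfies π ≤ α²π + σ², the function π ↦ (1/2)·log((α²π + σ²)/π) is strictly decreasing on (0, ∞), and the infimum of (1/2)·log((α²π + σ²)/π) over π ∈ (0, D] is attained at π = D and equals (1/2)·log(α² + σ²/D). -/
import Mathlib


/-- Closed form of the asymptotic Gaussian nonanticipative RDF for a scalar AR(1) source:
if `(1 − α²) D ≤ σ²` then every `0 < π ≤ D` satisfies `π ≤ α² π + σ²`, the rate function
`π ↦ (1/2) log((α² π + σ²)/π)` is strictly decreasing on `(0, ∞)`, and its infimum over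
`π ∈ (0, D]` is attained at `π = D` with value `(1/2) log(α² + σ²/D)`. -/
theorem scalar_ar1_nrdf_closed_form
    (α σ D : ℝ) (hσ : 0 < σ) (hD : 0 < D) (hfeas : (1 - α ^ 2) * D ≤ σ ^ 2) :
    (∀ π : ℝ, 0 < π → π ≤ D → π ≤ α ^ 2 * π + σ ^ 2) ∧
    StrictAntiOn (fun π : ℝ => 1 / 2 * Real.log ((α ^ 2 * π + σ ^ 2) / π)) (Set.Ioi 0) ∧
    IsLeast ((fun π : ℝ => 1 / 2 * Real.log ((α ^ 2 * π + σ ^ 2) / π)) '' Set.Ioc 0 D)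
      (1 / 2 * Real.log (α ^ 2 + σ ^ 2 / D)) := by
  have hkey : ∀ π : ℝ, 0 < π → (α ^ 2 * π + σ ^ 2) / π = α ^ 2 + σ ^ 2 / π := by
    intro π hπ; field_simp
  have hanti : StrictAntiOn (fun π : ℝ => 1 / 2 * Real.log ((α ^ 2 * π + σ ^ 2) / π))
      (Set.Ioi 0) := by
    intro x hx y hy hxy
    simp only [Set.mem_Ioi] at hx hy
    simp only [hkey x hx, hkey y hy]
    have h1 : α ^ 2 + σ ^ 2 / y < α ^ 2 + σ ^ 2 / x := by
      have := div_lt_div_of_pos_left (by positivity : (0:ℝ) < σ ^ 2) hx hxy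
      linarith
    have h2 : 0 < α ^ 2 + σ ^ 2 / y := by positivity
    have := Real.log_lt_log h2 h1
    linarith
  refine ⟨fun π hπ hπD => by nlinarith [sq_nonneg α, mul_pos hπ hD], hanti, ?_, ?_⟩
  · refine ⟨D, ⟨hD, le_refl D⟩, ?_⟩
    simp [hkey D hD]
  · rintro y ⟨π, ⟨hπ, hπD⟩, rfl⟩
    rcases eq_or_lt_of_le hπD with rfl | hlt
    · simp [hkey π hπ]
    · have := hanti (Set.mem_Ioi.mpr hπ) (Set.mem_Ioi.mpr hD) hlt
      simp only [hkey D hD] at this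
      exact this.le
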